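/- arXiv:1711.08670 — 2 statements merged into one kernel-verified Lean document; each statement's English description precedes it below -/
import Mathlib

section
/- Let (t_n) be a family of linear maps on the tower of BMW algebras satisfying stabilization and inclusion (with d = δ). Then for ε = ±1 and u, v ∈ BMW_{n−1}: t_{n+1}(u s_n^ε s_{n−1}^{−ε} s_n^ε v) = a^{−ε} t_n(u s_{n−1}^{2ε} v). -/
noncomputable section

open FreeAlgebra

/-- In the free algebra on generators `inl i ↦ s_i`, `inr i ↦ s_i⁻¹`, the element
`z·e_i = s_i⁻¹ - s_i + z·1`. -/
def BMWe (C : Type) [CommRing C] (z : Cˣ) {n : ℕ} (i : Fin n) :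
    FreeAlgebra C (Fin n ⊕ Fin n) :=
  ι C (Sum.inr i) - ι C (Sum.inl i) + (z : C) • 1

/-- Defining relations of the Birman–Murakami–Wenzl algebra with `n` generators
`s_1, …, s_n` (the paper's `BMW_{n+1}`), over a commutative ring `C` with invertible
parameters `a` and `z` (in the paper `z = q - q⁻¹`).  The relations involving
`e_i = (s_i⁻¹ - s_i)/z + 1` are written multiplied through by the unit `z`,
using `z·e_i = s_i⁻¹ - s_i + z·1`, which is equivalent since `z` is invertible. -/
inductive BMWRel (C : Type) [CommRing C] (a z : Cˣ) (n : ℕ) :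
    FreeAlgebra C (Fin n ⊕ Fin n) → FreeAlgebra C (Fin n ⊕ Fin n) → Prop
  | mul_inv (i : Fin n) :
      BMWRel C a z n (ι C (Sum.inl i) * ι C (Sum.inr i)) 1
  | inv_mul (i : Fin n) :
      BMWRel C a z n (ι C (Sum.inr i) * ι C (Sum.inl i)) 1
  | comm (i j : Fin n) (h : (i : ℕ) + 2 ≤ (j : ℕ)) :
      BMWRel C a z n (ι C (Sum.inl i) * ι C (Sum.inl j))
        (ι C (Sum.inl j) * ι C (Sum.inl i))
  | braid (i j : Fin n) (h : (j : ℕ) = (i : ℕ) + 1) :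
      BMWRel C a z n (ι C (Sum.inl i) * ι C (Sum.inl j) * ι C (Sum.inl i))
        (ι C (Sum.inl j) * ι C (Sum.inl i) * ι C (Sum.inl j))
  | es (i : Fin n) :
      BMWRel C a z n (BMWe C z i * ι C (Sum.inl i)) (((a⁻¹ : Cˣ) : C) • BMWe C z i)
  | ese (i j : Fin n) (h : (j : ℕ) = (i : ℕ) + 1) :
      BMWRel C a z n (BMWe C z i * ι C (Sum.inl j) * BMWe C z i)
        (((z : C) * (a : C)) • BMWe C z i)
  | esinve (i j : Fin n) (h : (j : ℕ) = (i : ℕ) + 1) :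
      BMWRel C a z n (BMWe C z i * ι C (Sum.inr j) * BMWe C z i)
        (((z : C) * ((a⁻¹ : Cˣ) : C)) • BMWe C z i)

/-- The Birman–Murakami–Wenzl algebra with `n` generators (the paper's `BMW_{n+1}`). -/
abbrev BMW (C : Type) [CommRing C] (a z : Cˣ) (n : ℕ) : Type :=
  RingQuot (BMWRel C a z n)

variable {C : Type} [CommRing C] {a z : Cˣ} {n : ℕ}

/-- The generator `s_{i+1}`. -/
def BMW.S (i : Fin n) : BMW C a z n :=
  RingQuot.mkAlgHom C (BMWRel C a z n) (ι C (Sum.inl i))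

/-- The inverse generator `s_{i+1}⁻¹`. -/
def BMW.Sinv (i : Fin n) : BMW C a z n :=
  RingQuot.mkAlgHom C (BMWRel C a z n) (ι C (Sum.inr i))

/-- The element `e_{i+1} = (s_{i+1}⁻¹ - s_{i+1})/z + 1`. -/
def BMW.e (i : Fin n) : BMW C a z n :=
  ((z⁻¹ : Cˣ) : C) • (BMW.Sinv i - BMW.S i) + 1

lemma BMW.S_mul_Sinv (i : Fin n) : BMW.S (a := a) (z := z) i * BMW.Sinv i = 1 := by
  have := RingQuot.mkAlgHom_rel C (BMWRel.mul_inv (C := C) (a := a) (z := z) i)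
  simp only [map_mul, map_one] at this
  exact this

lemma BMW.Sinv_mul_S (i : Fin n) : BMW.Sinv (a := a) (z := z) i * BMW.S i = 1 := by
  have := RingQuot.mkAlgHom_rel C (BMWRel.inv_mul (C := C) (a := a) (z := z) i)
  simp only [map_mul, map_one] at this
  exact this

/-- The generator `s_{i+1}` as a unit. -/
def BMW.sU (i : Fin n) : (BMW C a z n)ˣ :=
  ⟨BMW.S i, BMW.Sinv i, BMW.S_mul_Sinv i, BMW.Sinv_mul_S i⟩

lemma BMW.S_comm (i j : Fin n) (h : (i : ℕ) + 2 ≤ (j : ℕ)) :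
    BMW.S (a := a) (z := z) i * BMW.S j = BMW.S j * BMW.S i := by
  have := RingQuot.mkAlgHom_rel C (BMWRel.comm (C := C) (a := a) (z := z) i j h)
  simp only [map_mul] at this
  exact this

lemma BMW.S_braid (i j : Fin n) (h : (j : ℕ) = (i : ℕ) + 1) :
    BMW.S (a := a) (z := z) i * BMW.S j * BMW.S i = BMW.S j * BMW.S i * BMW.S j := by
  have := RingQuot.mkAlgHom_rel C (BMWRel.braid (C := C) (a := a) (z := z) i j h)
  simp only [map_mul] at this
  exact this

/-- The image of `z·e_i` in the BMW algebra. -/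
lemma BMW.mk_BMWe (i : Fin n) :
    RingQuot.mkAlgHom C (BMWRel C a z n) (BMWe C z i)
      = BMW.Sinv i - BMW.S i + (z : C) • 1 := by
  simp only [BMWe, map_add, map_sub, map_smul, map_one]
  rfl

lemma BMW.Es (i : Fin n) :
    (BMW.Sinv (a := a) (z := z) i - BMW.S i + (z : C) • 1) * BMW.S i
      = ((a⁻¹ : Cˣ) : C) • (BMW.Sinv i - BMW.S i + (z : C) • 1) := by
  have := RingQuot.mkAlgHom_rel C (BMWRel.es (C := C) (a := a) (z := z) i)
  simp only [map_mul, map_smul, BMW.mk_BMWe] at this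
  exact this

lemma BMW.EsE (i j : Fin n) (h : (j : ℕ) = (i : ℕ) + 1) :
    (BMW.Sinv (a := a) (z := z) i - BMW.S i + (z : C) • 1) * BMW.S j *
        (BMW.Sinv i - BMW.S i + (z : C) • 1)
      = ((z : C) * (a : C)) • (BMW.Sinv i - BMW.S i + (z : C) • 1) := by
  have := RingQuot.mkAlgHom_rel C (BMWRel.ese (C := C) (a := a) (z := z) i j h)
  simp only [map_mul, map_smul, BMW.mk_BMWe] at this
  exact this

lemma BMW.EsinvE (i j : Fin n) (h : (j : ℕ) = (i : ℕ) + 1) :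
    (BMW.Sinv (a := a) (z := z) i - BMW.S i + (z : C) • 1) * BMW.Sinv j *
        (BMW.Sinv i - BMW.S i + (z : C) • 1)
      = ((z : C) * ((a⁻¹ : Cˣ) : C)) • (BMW.Sinv i - BMW.S i + (z : C) • 1) := by
  have := RingQuot.mkAlgHom_rel C (BMWRel.esinve (C := C) (a := a) (z := z) i j h)
  simp only [map_mul, map_smul, BMW.mk_BMWe] at this
  exact this

/-- The natural embedding `BMW_{m+1} → BMW_{n+1}` (`ι` iterated). -/
def BMW.ιle {m n : ℕ} (h : m ≤ n) : BMW C a z m →ₐ[C] BMW C a z n :=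
  RingQuot.liftAlgHom C ⟨FreeAlgebra.lift C
      (Sum.elim (fun i => BMW.S (Fin.castLE h i)) (fun i => BMW.Sinv (Fin.castLE h i))), by
    rintro x y hxy
    induction hxy with
    | mul_inv i =>
        simp only [map_mul, map_one, FreeAlgebra.lift_ι_apply, Sum.elim_inl, Sum.elim_inr]
        exact BMW.S_mul_Sinv _
    | inv_mul i =>
        simp only [map_mul, map_one, FreeAlgebra.lift_ι_apply, Sum.elim_inl, Sum.elim_inr]
        exact BMW.Sinv_mul_S _
    | comm i j hij =>
        simp only [map_mul, FreeAlgebra.lift_ι_apply, Sum.elim_inl]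
        exact BMW.S_comm _ _ (by simpa using hij)
    | braid i j hij =>
        simp only [map_mul, FreeAlgebra.lift_ι_apply, Sum.elim_inl]
        exact BMW.S_braid _ _ (by simpa using hij)
    | es i =>
        simp only [BMWe, map_mul, map_add, map_sub, map_one, map_smul,
          FreeAlgebra.lift_ι_apply, Sum.elim_inl, Sum.elim_inr]
        exact BMW.Es _
    | ese i j hij =>
        simp only [BMWe, map_mul, map_add, map_sub, map_one, map_smul,
          FreeAlgebra.lift_ι_apply, Sum.elim_inl, Sum.elim_inr]
        exact BMW.EsE _ _ (by simpa using hij)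
    | esinve i j hij =>
        simp only [BMWe, map_mul, map_add, map_sub, map_one, map_smul,
          FreeAlgebra.lift_ι_apply, Sum.elim_inl, Sum.elim_inr]
        exact BMW.EsinvE _ _ (by simpa using hij)⟩


/-- A family of linear maps on the tower of BMW algebras satisfying the (positive and
negative) stabilization property and the inclusion property with parameter `d`. -/
def IsBMWStabIncl {C : Type} [CommRing C] (a z : Cˣ) (d : C)
    (t : ∀ m : ℕ, BMW C a z m →ₗ[C] C) : Prop :=
  (∀ (m : ℕ) (u v : BMW C a z m),
    t (m + 1) (BMW.ιle (Nat.le_succ m) u * BMW.S (Fin.last m) *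
        BMW.ιle (Nat.le_succ m) v) = (a : C) * t m (u * v)) ∧
  (∀ (m : ℕ) (u v : BMW C a z m),
    t (m + 1) (BMW.ιle (Nat.le_succ m) u * BMW.Sinv (Fin.last m) *
        BMW.ιle (Nat.le_succ m) v) = ((a⁻¹ : Cˣ) : C) * t m (u * v)) ∧
  (∀ (m : ℕ) (u : BMW C a z m),
    t (m + 1) (BMW.ιle (Nat.le_succ m) u) = d * t m u)

/-!
Write `E_i = z e_i = s_i⁻¹ - s_i + z`. Expanding the middle `E_i` in
`s_{i+1}⁻¹ (E_i s_{i+1} E_i) = z a s_{i+1}⁻¹ E_i` and using the braid relation gives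
`s_i s_{i+1} E_i = s_i⁻¹ s_{i+1}⁻¹ E_i`. Since both `s_i s_{i+1}` and `s_i⁻¹ s_{i+1}⁻¹` conjugate
`s_i` into `s_{i+1}`, this yields `s_{i+1} E_i s_{i+1} = s_i⁻¹ E_{i+1} s_i⁻¹`, hence
`s_{i+1} s_i⁻¹ s_{i+1} = s_i s_{i+1} s_i - z s_{i+1}² + s_i⁻¹ E_{i+1} s_i⁻¹`,
and similarly for `ε = -1`.

On the trace side, `z δ = a - a⁻¹ + z` turns stabilization and inclusion into
`t_{n+1}(x E_n y) = z t_n(xy)` and `t_{n+1}(x s_n^{±2} y) = (δ + z (a - a⁻¹)) t_n(xy)`.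
Every term of the expansion is then a multiple of `t_{n-1}(uv)`, and the coefficients add up to
`a^{-ε}` times that of `t_n(u s_{n-1}^{2ε} v)`.
-/

namespace BMW

/-- `z • e i`; the defining relations involving `e i` are phrased in terms of it. -/
def E (i : Fin n) : BMW C a z n := Sinv i - S i + (z : C) • 1

variable {i j : Fin n}

lemma val_sU (i : Fin n) : ((sU i : (BMW C a z n)ˣ) : BMW C a z n) = S i := rfl

lemma val_sU_inv (i : Fin n) : (((sU i)⁻¹ : (BMW C a z n)ˣ) : BMW C a z n) = Sinv i := rfl

lemma S_mul_E_comm (i : Fin n) : S i * E (a := a) (z := z) i = E i * S i := by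
  simp only [E, mul_add, add_mul, mul_sub, sub_mul, mul_smul_comm, smul_mul_assoc, mul_one,
    one_mul, S_mul_Sinv, Sinv_mul_S]

lemma S_mul_E (i : Fin n) : S i * E (a := a) (z := z) i = ((a⁻¹ : Cˣ) : C) • E i := by
  rw [S_mul_E_comm]; exact Es i

lemma Sinv_mul_E (i : Fin n) : Sinv i * E (a := a) (z := z) i = (a : C) • E i := by
  calc Sinv i * E (a := a) (z := z) i
      = (a : C) • (Sinv i * (((a⁻¹ : Cˣ) : C) • E i)) := by
        rw [mul_smul_comm, smul_smul, Units.mul_inv, one_smul]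
    _ = (a : C) • E i := by rw [← S_mul_E, ← mul_assoc, Sinv_mul_S, one_mul]

lemma S_mul_S (i : Fin n) :
    S i * S i = 1 + (z : C) • S i - ((a⁻¹ : Cˣ) : C) • E (a := a) (z := z) i := by
  rw [← S_mul_E]
  simp only [E, mul_add, mul_sub, mul_smul_comm, mul_one, S_mul_Sinv]
  abel

lemma Sinv_mul_Sinv (i : Fin n) :
    Sinv i * Sinv i = 1 - (z : C) • Sinv i + (a : C) • E (a := a) (z := z) i := by
  rw [← Sinv_mul_E]
  simp only [E, mul_add, mul_sub, mul_smul_comm, mul_one, Sinv_mul_S]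
  abel

section Braid

variable (h : (j : ℕ) = (i : ℕ) + 1)
include h

lemma sU_braid : sU (a := a) (z := z) i * sU j * sU i = sU j * sU i * sU j :=
  Units.ext (S_braid i j h)

lemma sU_inv_mul_sU_inv_mul_sU :
    (sU i)⁻¹ * (sU j)⁻¹ * sU (a := a) (z := z) i = sU j * ((sU i)⁻¹ * (sU j)⁻¹) := by
  calc _ = (sU i)⁻¹ * (sU j)⁻¹ * (sU i * sU j * sU i) * (sU i)⁻¹ * (sU j)⁻¹ := by group
    _ = _ := by rw [sU_braid h]; group

lemma sU_inv_mul_sU_mul_sU :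
    (sU j)⁻¹ * sU i * sU (a := a) (z := z) j = sU i * sU j * (sU i)⁻¹ := by
  calc _ = (sU j)⁻¹ * (sU i * sU j * sU i) * (sU i)⁻¹ := by group
    _ = _ := by rw [sU_braid h]; group

lemma Sinv_mul_S_mul_S : Sinv j * S i * S (a := a) (z := z) j = S i * S j * Sinv i :=
  congrArg Units.val (sU_inv_mul_sU_mul_sU h)

lemma Sinv_mul_Sinv_mul_S :
    Sinv j * Sinv i * S (a := a) (z := z) j = S i * Sinv j * Sinv i := by
  have : (sU j)⁻¹ * (sU i)⁻¹ * sU (a := a) (z := z) j = sU i * (sU j)⁻¹ * (sU i)⁻¹ := by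
    calc _ = ((sU j)⁻¹ * sU i * sU j)⁻¹ := by group
      _ = _ := by rw [sU_inv_mul_sU_mul_sU h]; group
  exact congrArg Units.val this

lemma Sinv_braid :
    Sinv j * Sinv i * Sinv (a := a) (z := z) j = Sinv i * Sinv j * Sinv i := by
  have : (sU j)⁻¹ * (sU i)⁻¹ * (sU (a := a) (z := z) j)⁻¹
      = (sU i)⁻¹ * (sU j)⁻¹ * (sU i)⁻¹ := by
    calc _ = (sU j * sU i * sU j)⁻¹ := by group
      _ = _ := by rw [← sU_braid h]; group
  exact congrArg Units.val this

end Braid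

lemma mul_E_eq_E_mul_of_mul_sU {w : (BMW C a z n)ˣ} (hw : w * sU i = sU j * w) :
    (w : BMW C a z n) * E i = E j * (w : BMW C a z n) := by
  have hw' : w * (sU i)⁻¹ = (sU j)⁻¹ * w := by
    calc w * (sU i)⁻¹ = (sU j)⁻¹ * (w * sU i) * (sU i)⁻¹ := by rw [hw]; group
      _ = _ := by group
  have hS := congrArg Units.val hw
  have hSinv := congrArg Units.val hw'
  simp only [Units.val_mul, val_sU, val_sU_inv] at hS hSinv
  simp only [E, mul_add, add_mul, mul_sub, sub_mul, mul_smul_comm, smul_mul_assoc, mul_one,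
    one_mul, hS, hSinv]

lemma S_eq (i : Fin n) : S i = Sinv i + (z : C) • 1 - E (a := a) (z := z) i := by
  rw [E]; abel

lemma mul_E_mul (i : Fin n) (x y : BMW C a z n) :
    x * E i * y = x * Sinv i * y - x * S i * y + (z : C) • (x * y) := by
  simp only [E, mul_add, add_mul, mul_sub, sub_mul, mul_smul_comm, smul_mul_assoc, mul_one]

lemma E_mul_S_mul_E (h : (j : ℕ) = (i : ℕ) + 1) :
    E i * S j * E (a := a) (z := z) i = ((z : C) * (a : C)) • E i :=
  EsE i j h

lemma E_mul_Sinv_mul_E (h : (j : ℕ) = (i : ℕ) + 1) :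
    E i * Sinv j * E (a := a) (z := z) i = ((z : C) * ((a⁻¹ : Cˣ) : C)) • E i :=
  EsinvE i j h

lemma S_mul_S_mul_E_eq_Sinv_mul_Sinv_mul_E (h : (j : ℕ) = (i : ℕ) + 1) :
    S i * S j * E (a := a) (z := z) i = Sinv i * Sinv j * E i := by
  have hexp : Sinv j * E i * S j * E (a := a) (z := z) i
      = (a : C) • (S i * Sinv j * E i) - (a : C) • (S i * S j * E i) + (z : C) • E i := by
    rw [mul_assoc _ (S j), mul_E_mul]
    simp only [← mul_assoc, Sinv_mul_Sinv_mul_S h, Sinv_mul_S_mul_S h, Sinv_mul_S, one_mul]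
    simp only [mul_assoc, Sinv_mul_E, mul_smul_comm]
  have hrel : Sinv j * E i * S j * E (a := a) (z := z) i
      = ((z : C) * (a : C)) • (Sinv j * E i) := by
    rw [show Sinv j * E i * S j * E (a := a) (z := z) i = Sinv j * (E i * S j * E i) by
      simp only [mul_assoc], E_mul_S_mul_E h, mul_smul_comm]
  have hSi : S i * Sinv j * E (a := a) (z := z) i
      = Sinv i * Sinv j * E i + (z : C) • (Sinv j * E i) - ((z : C) * ((a⁻¹ : Cˣ) : C)) • E i := by
    rw [S_eq i]
    simp only [add_mul, sub_mul, smul_mul_assoc, one_mul, E_mul_Sinv_mul_E h]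
  linear_combination (norm := match_scalars) ((a⁻¹ : Cˣ) : C) • (hexp - hrel) + hSi
  all_goals grind [Units.inv_mul]

lemma S_mul_S_mul_E_eq_E_mul (h : (j : ℕ) = (i : ℕ) + 1) :
    S i * S j * E (a := a) (z := z) i = E j * (S i * S j) := by
  have := mul_E_eq_E_mul_of_mul_sU (w := sU (a := a) (z := z) i * sU j)
    (by rw [sU_braid h, mul_assoc])
  rwa [Units.val_mul] at this

lemma Sinv_mul_Sinv_mul_E_eq_E_mul (h : (j : ℕ) = (i : ℕ) + 1) :
    Sinv i * Sinv j * E (a := a) (z := z) i = E j * (Sinv i * Sinv j) := by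
  have := mul_E_eq_E_mul_of_mul_sU (w := (sU (a := a) (z := z) i)⁻¹ * (sU j)⁻¹)
    (sU_inv_mul_sU_inv_mul_sU h)
  rwa [Units.val_mul] at this

lemma S_mul_E_mul_S (h : (j : ℕ) = (i : ℕ) + 1) :
    S j * E (a := a) (z := z) i * S j = Sinv i * E j * Sinv i := by
  calc S j * E (a := a) (z := z) i * S j = Sinv i * (S i * S j * E i) * S j := by
        rw [mul_assoc (S i), ← mul_assoc (Sinv i), Sinv_mul_S, one_mul]
    _ = Sinv i * E j * Sinv i * (Sinv j * S j) := by
        rw [S_mul_S_mul_E_eq_Sinv_mul_Sinv_mul_E h, Sinv_mul_Sinv_mul_E_eq_E_mul h]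
        simp only [mul_assoc]
    _ = _ := by rw [Sinv_mul_S, mul_one]

lemma Sinv_mul_E_mul_Sinv (h : (j : ℕ) = (i : ℕ) + 1) :
    Sinv j * E (a := a) (z := z) i * Sinv j = S i * E j * S i := by
  calc Sinv j * E (a := a) (z := z) i * Sinv j = S i * (Sinv i * Sinv j * E i) * Sinv j := by
        rw [mul_assoc (Sinv i), ← mul_assoc (S i), S_mul_Sinv, one_mul]
    _ = S i * E j * S i * (S j * Sinv j) := by
        rw [← S_mul_S_mul_E_eq_Sinv_mul_Sinv_mul_E h, S_mul_S_mul_E_eq_E_mul h]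
        simp only [mul_assoc]
    _ = _ := by rw [S_mul_Sinv, mul_one]

lemma S_mul_Sinv_mul_S (h : (j : ℕ) = (i : ℕ) + 1) :
    S j * Sinv i * S (a := a) (z := z) j
      = S i * S j * S i - (z : C) • (S j * S j) + Sinv i * E j * Sinv i := by
  rw [← S_mul_E_mul_S h, mul_E_mul, S_braid i j h]; abel

lemma Sinv_mul_S_mul_Sinv (h : (j : ℕ) = (i : ℕ) + 1) :
    Sinv j * S i * Sinv (a := a) (z := z) j
      = Sinv i * Sinv j * Sinv i + (z : C) • (Sinv j * Sinv j) - S i * E j * S i := by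
  rw [← Sinv_mul_E_mul_Sinv h, mul_E_mul, Sinv_braid h]; abel

lemma ιle_S {m n : ℕ} (h : m ≤ n) (i : Fin m) :
    ιle (C := C) (a := a) (z := z) h (S i) = S (Fin.castLE h i) := by
  rw [S, ιle, RingQuot.liftAlgHom_mkAlgHom_apply, FreeAlgebra.lift_ι_apply]
  rfl

lemma ιle_Sinv {m n : ℕ} (h : m ≤ n) (i : Fin m) :
    ιle (C := C) (a := a) (z := z) h (Sinv i) = Sinv (Fin.castLE h i) := by
  rw [Sinv, ιle, RingQuot.liftAlgHom_mkAlgHom_apply, FreeAlgebra.lift_ι_apply]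
  rfl

lemma ιle_comp_ιle {k l m : ℕ} (h₁ : k ≤ l) (h₂ : l ≤ m) :
    (ιle (C := C) (a := a) (z := z) h₂).comp (ιle h₁) = ιle (h₁.trans h₂) := by
  apply RingQuot.ringQuot_ext'
  apply FreeAlgebra.hom_ext
  funext g
  rcases g with i | i
  · exact (congrArg (ιle h₂) (ιle_S h₁ i)).trans ((ιle_S h₂ _).trans (ιle_S _ i).symm)
  · exact (congrArg (ιle h₂) (ιle_Sinv h₁ i)).trans ((ιle_Sinv h₂ _).trans (ιle_Sinv _ i).symm)

lemma ιle_ιle {k l m : ℕ} (h₁ : k ≤ l) (h₂ : l ≤ m) (x : BMW C a z k) :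
    ιle (a := a) (z := z) h₂ (ιle h₁ x) = ιle (h₁.trans h₂) x :=
  DFunLike.congr_fun (ιle_comp_ιle h₁ h₂) x

end BMW

open BMW

section Trace

variable {t : ∀ m : ℕ, BMW C a z m →ₗ[C] C}

lemma trace_sandwich {m : ℕ} {X : BMW C a z (m + 1)} {c : C}
    (hX : ∀ x y : BMW C a z m,
      t (m + 1) (ιle (Nat.le_succ m) x * X * ιle (Nat.le_succ m) y) = c * t m (x * y))
    (x p q y : BMW C a z m) :
    t (m + 1) (ιle (Nat.le_succ m) x * (ιle (Nat.le_succ m) p * X * ιle (Nat.le_succ m) q) *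
        ιle (Nat.le_succ m) y) = c * t m (x * (p * q) * y) := by
  have hsplit : ιle (Nat.le_succ m) x * (ιle (Nat.le_succ m) p * X * ιle (Nat.le_succ m) q) *
      ιle (Nat.le_succ m) y = ιle (Nat.le_succ m) (x * p) * X * ιle (Nat.le_succ m) (q * y) := by
    simp only [map_mul, mul_assoc]
  rw [hsplit, hX]
  simp only [mul_assoc]

namespace IsBMWStabIncl

variable {d : C} (ht : IsBMWStabIncl a z d t)
  (hzd : (z : C) * d = (a : C) - ((a⁻¹ : Cˣ) : C) + (z : C))
include ht hzd

lemma apply_E (m : ℕ) (x y : BMW C a z m) :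
    t (m + 1) (ιle (Nat.le_succ m) x * E (Fin.last m) * ιle (Nat.le_succ m) y)
      = (z : C) * t m (x * y) := by
  rw [mul_E_mul, map_add, map_sub, map_smul, ht.1, ht.2.1, ← map_mul, ht.2.2, smul_eq_mul]
  linear_combination t m (x * y) * hzd

lemma apply_S_mul_S (m : ℕ) (x y : BMW C a z m) :
    t (m + 1) (ιle (Nat.le_succ m) x * (S (Fin.last m) * S (Fin.last m)) *
        ιle (Nat.le_succ m) y)
      = (d + (z : C) * ((a : C) - ((a⁻¹ : Cˣ) : C))) * t m (x * y) := by
  rw [S_mul_S]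
  simp only [mul_add, add_mul, mul_sub, sub_mul, mul_one, mul_smul_comm, smul_mul_assoc, map_add,
    map_sub, map_smul, smul_eq_mul]
  rw [← map_mul, ht.2.2, ht.1, ht.apply_E hzd]
  ring

lemma apply_Sinv_mul_Sinv (m : ℕ) (x y : BMW C a z m) :
    t (m + 1) (ιle (Nat.le_succ m) x * (Sinv (Fin.last m) * Sinv (Fin.last m)) *
        ιle (Nat.le_succ m) y)
      = (d + (z : C) * ((a : C) - ((a⁻¹ : Cˣ) : C))) * t m (x * y) := by
  rw [Sinv_mul_Sinv]
  simp only [mul_add, add_mul, mul_sub, sub_mul, mul_one, mul_smul_comm, smul_mul_assoc, map_add,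
    map_sub, map_smul, smul_eq_mul]
  rw [← map_mul, ht.2.2, ht.2.1, ht.apply_E hzd]
  ring

lemma apply_S_mul_Sinv_mul_S (m : ℕ) (u v : BMW C a z m) :
    t (m + 2) (ιle (Nat.le_add_right m 2) u *
        (S (Fin.last (m + 1)) * Sinv (Fin.last m).castSucc * S (Fin.last (m + 1))) *
        ιle (Nat.le_add_right m 2) v)
      = ((a⁻¹ : Cˣ) : C) * t (m + 1)
          (ιle (Nat.le_succ m) u * (S (Fin.last m) * S (Fin.last m)) * ιle (Nat.le_succ m) v) := by
  have hS : S (Fin.last m).castSucc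
      = ιle (Nat.le_succ (m + 1)) (S (a := a) (z := z) (Fin.last m)) :=
    (ιle_S _ _).symm
  have hSinv : Sinv (Fin.last m).castSucc
      = ιle (Nat.le_succ (m + 1)) (Sinv (a := a) (z := z) (Fin.last m)) :=
    (ιle_Sinv _ _).symm
  rw [← ιle_ιle (Nat.le_succ m) (Nat.le_succ (m + 1)) u,
    ← ιle_ιle (Nat.le_succ m) (Nat.le_succ (m + 1)) v, S_mul_Sinv_mul_S rfl, hS, hSinv]
  simp only [mul_add, add_mul, mul_sub, sub_mul, mul_smul_comm, smul_mul_assoc, map_add, map_sub,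
    map_smul, smul_eq_mul]
  rw [trace_sandwich (ht.1 (m + 1)), trace_sandwich (ht.apply_E hzd (m + 1)),
    ht.apply_S_mul_S hzd (m + 1), ← map_mul, ht.2.2, ht.apply_S_mul_S hzd,
    ht.apply_Sinv_mul_Sinv hzd]
  linear_combination -(d + (z : C) * ((a : C) - ((a⁻¹ : Cˣ) : C))) * t m (u * v) * hzd

lemma apply_Sinv_mul_S_mul_Sinv (m : ℕ) (u v : BMW C a z m) :
    t (m + 2) (ιle (Nat.le_add_right m 2) u *
        (Sinv (Fin.last (m + 1)) * S (Fin.last m).castSucc * Sinv (Fin.last (m + 1))) *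
        ιle (Nat.le_add_right m 2) v)
      = (a : C) * t (m + 1) (ιle (Nat.le_succ m) u * (Sinv (Fin.last m) * Sinv (Fin.last m)) *
          ιle (Nat.le_succ m) v) := by
  have hS : S (Fin.last m).castSucc
      = ιle (Nat.le_succ (m + 1)) (S (a := a) (z := z) (Fin.last m)) :=
    (ιle_S _ _).symm
  have hSinv : Sinv (Fin.last m).castSucc
      = ιle (Nat.le_succ (m + 1)) (Sinv (a := a) (z := z) (Fin.last m)) :=
    (ιle_Sinv _ _).symm
  rw [← ιle_ιle (Nat.le_succ m) (Nat.le_succ (m + 1)) u,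
    ← ιle_ιle (Nat.le_succ m) (Nat.le_succ (m + 1)) v, Sinv_mul_S_mul_Sinv rfl, hS, hSinv]
  simp only [mul_add, add_mul, mul_sub, sub_mul, mul_smul_comm, smul_mul_assoc, map_add, map_sub,
    map_smul, smul_eq_mul]
  rw [trace_sandwich (ht.2.1 (m + 1)), trace_sandwich (ht.apply_E hzd (m + 1)),
    ht.apply_Sinv_mul_Sinv hzd (m + 1), ← map_mul, ht.2.2, ht.apply_S_mul_S hzd,
    ht.apply_Sinv_mul_Sinv hzd]
  linear_combination (d + (z : C) * ((a : C) - ((a⁻¹ : Cˣ) : C))) * t m (u * v) * hzd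

end IsBMWStabIncl

end Trace

/-- If `(t_n)` satisfies stabilization and inclusion (with `d = δ`),
then for `ε = ±1` and `u, v ∈ BMW_{n−1}`:
`t_{n+1}(u s_n^ε s_{n−1}^{−ε} s_n^ε v) = a^{−ε} t_n(u s_{n−1}^{2ε} v)`. -/
theorem bmw_stab_incl_zigzag (C : Type) [CommRing C] (a z : Cˣ)
    (t : ∀ m : ℕ, BMW C a z m →ₗ[C] C)
    (ht : IsBMWStabIncl a z
      (((a : C) - ((a⁻¹ : Cˣ) : C)) * ((z⁻¹ : Cˣ) : C) + 1) t)
    (ε : ℤ) (hε : ε = 1 ∨ ε = -1) :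
    ∀ (m : ℕ) (u v : BMW C a z m),
      t (m + 2) (BMW.ιle (by omega) u *
          ((BMW.sU (⟨m + 1, by omega⟩ : Fin (m + 2)) ^ ε *
            BMW.sU (⟨m, by omega⟩ : Fin (m + 2)) ^ (-ε) *
            BMW.sU (⟨m + 1, by omega⟩ : Fin (m + 2)) ^ ε :
              (BMW C a z (m + 2))ˣ) : BMW C a z (m + 2)) *
          BMW.ιle (by omega) v)
        = ((a ^ (-ε) : Cˣ) : C) *
            t (m + 1) (BMW.ιle (Nat.le_succ m) u *
              ((BMW.sU (⟨m, by omega⟩ : Fin (m + 1)) ^ (2 * ε) :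
                (BMW C a z (m + 1))ˣ) : BMW C a z (m + 1)) *
              BMW.ιle (Nat.le_succ m) v) := by
  have hzd : (z : C) * (((a : C) - ((a⁻¹ : Cˣ) : C)) * ((z⁻¹ : Cˣ) : C) + 1)
      = (a : C) - ((a⁻¹ : Cˣ) : C) + (z : C) := by
    linear_combination ((a : C) - ((a⁻¹ : Cˣ) : C)) * Units.mul_inv z
  intro m u v
  rcases hε with rfl | rfl
  · simp only [zpow_one, zpow_neg_one, zpow_two, Units.val_mul, val_sU, val_sU_inv, mul_one]
    exact ht.apply_S_mul_Sinv_mul_S hzd m u v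
  · simp only [zpow_one, neg_neg, zpow_neg, zpow_two, mul_neg, mul_one, mul_inv_rev,
      Units.val_mul, val_sU, val_sU_inv]
    exact ht.apply_Sinv_mul_S_mul_Sinv hzd m u v
end
end

section
/- Let (τ_n) be the transverse Markov trace on the Hecke algebras with generic parameters {α_n}, and define e(P_1α_1 + P_2α_2 + ⋯) = min{−deg_a(P_k) − k : P_k ≠ 0}. Then for every braid β on n strands with image u in H_n, one has e(τ_n(u)) ≥ −n. -/
/-!
Write `H_n` for `Hecke C z n`, with generators `σ_0, …, σ_{n-1}`. Over the constants `K`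
(with `z ∈ K`), the `K`-span of braid words satisfies Jones' decomposition
`H_{n+1} = H_n + H_n σ_n H_n`: closure under right multiplication by `σ_n` only uses
`σ_n² = 1 + z σ_n`, that `σ_n` commutes with `H_{n-1}`, and the braid relation
`σ_n σ_{n-1} σ_n = σ_{n-1} σ_n σ_{n-1}`. The trace property and the braid relation extend
positive stabilization to `τ_{m+1}(x σ_j y) = a τ_m(x y)` for `x, y ∈ H_j`, `j ≤ m`.
By induction on `j`, every such element of `H_j`, viewed in `H_m`, has `τ_m = ∑ P_k α_k` with
`deg_a P_k ≤ m - k`: constants contribute only `α_m`, and each stabilization raises `deg_a`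
by one while removing one strand.
-/

noncomputable section

/-- Defining relations of the Hecke algebra with `n` generators
(the paper's `H_{n+1}`), over a commutative ring `C` with quadratic
parameter `z` (in the paper `z = q - q⁻¹`). -/
inductive HeckeRel (C : Type) [CommRing C] (z : C) (n : ℕ) :
    FreeAlgebra C (Fin n) → FreeAlgebra C (Fin n) → Prop
  | comm (i j : Fin n) (h : (i : ℕ) + 2 ≤ (j : ℕ)) :
      HeckeRel C z n (FreeAlgebra.ι C i * FreeAlgebra.ι C j)
        (FreeAlgebra.ι C j * FreeAlgebra.ι C i)
  | braid (i j : Fin n) (h : (j : ℕ) = (i : ℕ) + 1) :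
      HeckeRel C z n (FreeAlgebra.ι C i * FreeAlgebra.ι C j * FreeAlgebra.ι C i)
        (FreeAlgebra.ι C j * FreeAlgebra.ι C i * FreeAlgebra.ι C j)
  | quad (i : Fin n) :
      HeckeRel C z n (FreeAlgebra.ι C i * FreeAlgebra.ι C i)
        (1 + z • FreeAlgebra.ι C i)

/-- The Hecke algebra with `n` generators `σ_1, …, σ_n` (the paper's `H_{n+1}`). -/
abbrev Hecke (C : Type) [CommRing C] (z : C) (n : ℕ) : Type :=
  RingQuot (HeckeRel C z n)

variable {C : Type} [CommRing C] {z : C} {n : ℕ}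

/-- The generator `σ_{i+1}` of the Hecke algebra. -/
def Hecke.σ (i : Fin n) : Hecke C z n :=
  RingQuot.mkAlgHom C (HeckeRel C z n) (FreeAlgebra.ι C i)

lemma Hecke.σ_comm (i j : Fin n) (h : (i : ℕ) + 2 ≤ (j : ℕ)) :
    Hecke.σ (z := z) i * Hecke.σ j = Hecke.σ j * Hecke.σ i := by
  have := RingQuot.mkAlgHom_rel C (HeckeRel.comm (C := C) (z := z) i j h)
  simp only [map_mul] at this
  exact this

lemma Hecke.σ_braid (i j : Fin n) (h : (j : ℕ) = (i : ℕ) + 1) :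
    Hecke.σ (z := z) i * Hecke.σ j * Hecke.σ i = Hecke.σ j * Hecke.σ i * Hecke.σ j := by
  have := RingQuot.mkAlgHom_rel C (HeckeRel.braid (C := C) (z := z) i j h)
  simp only [map_mul] at this
  exact this

lemma Hecke.σ_quad (i : Fin n) :
    Hecke.σ (z := z) i * Hecke.σ i = 1 + z • Hecke.σ i := by
  have := RingQuot.mkAlgHom_rel C (HeckeRel.quad (C := C) (z := z) i)
  simp only [map_mul, map_add, map_one, map_smul] at this
  exact this

lemma Hecke.σ_mul_inv (i : Fin n) :
    Hecke.σ (z := z) i * (Hecke.σ i - z • 1) = 1 := by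
  rw [mul_sub, Hecke.σ_quad, mul_smul_comm, mul_one]; abel

lemma Hecke.inv_mul_σ (i : Fin n) :
    (Hecke.σ (z := z) i - z • 1) * Hecke.σ i = 1 := by
  rw [sub_mul, Hecke.σ_quad, smul_mul_assoc, one_mul]; abel

/-- The generator `σ_{i+1}` as a unit. -/
def Hecke.σU (i : Fin n) : (Hecke C z n)ˣ :=
  ⟨Hecke.σ i, Hecke.σ i - z • 1, Hecke.σ_mul_inv i, Hecke.inv_mul_σ i⟩

/-- The natural embedding `H_{m+1} → H_{n+1}` (`ι` iterated). -/
def Hecke.ιle {m n : ℕ} (h : m ≤ n) : Hecke C z m →ₐ[C] Hecke C z n :=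
  RingQuot.liftAlgHom C ⟨FreeAlgebra.lift C (fun i => Hecke.σ (Fin.castLE h i)), by
    rintro x y hxy
    induction hxy with
    | comm i j hij =>
        simp only [map_mul, FreeAlgebra.lift_ι_apply]
        exact Hecke.σ_comm _ _ (by simpa using hij)
    | braid i j hij =>
        simp only [map_mul, FreeAlgebra.lift_ι_apply]
        exact Hecke.σ_braid _ _ (by simpa using hij)
    | quad i =>
        simp only [map_mul, map_add, map_one, map_smul, FreeAlgebra.lift_ι_apply]
        exact Hecke.σ_quad _⟩

/-- The shift morphism `sh^m : H_{l+1} → H_{l+m+1}`, sending `σ_i` to `σ_{i+m}`. -/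
def Hecke.shift (m : ℕ) {l : ℕ} : Hecke C z l →ₐ[C] Hecke C z (m + l) :=
  RingQuot.liftAlgHom C ⟨FreeAlgebra.lift C (fun i => Hecke.σ (Fin.natAdd m i)), by
    rintro x y hxy
    induction hxy with
    | comm i j hij =>
        simp only [map_mul, FreeAlgebra.lift_ι_apply]
        exact Hecke.σ_comm _ _ (by simp [Fin.natAdd]; omega)
    | braid i j hij =>
        simp only [map_mul, FreeAlgebra.lift_ι_apply]
        exact Hecke.σ_braid _ _ (by simp [Fin.natAdd]; omega)
    | quad i =>
        simp only [map_mul, map_add, map_one, map_smul, FreeAlgebra.lift_ι_apply]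
        exact Hecke.σ_quad _⟩

theorem trace_conj_mul_of_braid {A M : Type*} [Monoid A] (τ : A → M)
    (hτ : ∀ u v, τ (u * v) = τ (v * u)) {s s' : Aˣ} (hbraid : s * s' * s = s' * s * s')
    {w : A} (hw : Commute w s') : τ (s * w * ↑s⁻¹ * s') = τ (w * s) := by
  have key : s⁻¹ * s' * s = s' * s * s'⁻¹ := by
    rw [show s' * s * s'⁻¹ = s⁻¹ * (s * s' * s) * s'⁻¹ by group, hbraid]; group
  calc τ (s * w * ↑s⁻¹ * s') = τ (w * ↑(s⁻¹ * s' * s)) := by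
        rw [mul_assoc, mul_assoc, hτ]; simp only [Units.val_mul, mul_assoc]
    _ = τ (s' * (w * s) * ↑s'⁻¹) := by
        rw [key]; simp only [Units.val_mul, ← mul_assoc, hw.eq]
    _ = τ (w * s) := by rw [hτ, ← mul_assoc, Units.inv_mul, one_mul]

theorem Algebra.toSubmodule_adjoin_le_of_mul_mem {K A : Type*} [CommSemiring K] [Semiring A]
    [Algebra K A] {s : Set A} {V : Submodule K A} (h1 : 1 ∈ V)
    (hmul : ∀ v ∈ V, ∀ g ∈ s, v * g ∈ V) : Subalgebra.toSubmodule (Algebra.adjoin K s) ≤ V := by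
  rw [Algebra.adjoin_eq_span, Submodule.span_le]
  intro x hx
  induction hx using Submonoid.closure_induction_right with
  | one => exact h1
  | mul_right x _ g hg ih => exact hmul x ih g hg

namespace Submodule

variable {K A : Type*} [CommSemiring K] [Semiring A] [Algebra K A] {P Q : Submodule K A} {s : A}

/-- With `P` the image of `H_n` in `H_{n+1}` and `s = σ_n`, this is the right-hand side of
Jones' decomposition `H_{n+1} = H_n + H_n σ_n H_n`. -/
def sandwich (P : Submodule K A) (s : A) : Submodule K A :=
  P ⊔ P * span K {s} * P

theorem map_sandwich {B : Type*} [Semiring B] [Algebra K B] (f : A →ₐ[K] B) :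
    (P.sandwich s).map f.toLinearMap = (P.map f.toLinearMap).sandwich (f s) := by
  simp only [sandwich, Submodule.map_sup, Submodule.map_mul, Submodule.map_span,
    Set.image_singleton, AlgHom.toLinearMap_apply]

theorem mul_sandwich (hP : P * P = P) : P * P.sandwich s = P.sandwich s := by
  simp only [sandwich, mul_sup, ← mul_assoc, hP]

theorem mul_span_le_sandwich (h1 : 1 ∈ P) (hQ : Q ≤ P) : Q * span K {s} ≤ P.sandwich s :=
  calc Q * span K {s} = Q * span K {s} * 1 := (mul_one _).symm
    _ ≤ P * span K {s} * P := mul_le_mul' (mul_le_mul_left hQ _) (one_le.2 h1)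
    _ ≤ P.sandwich s := le_sup_right

theorem sandwich_mul_span_le_of_mem (hP : P * P = P) {g : A} (hg : g ∈ P) :
    P.sandwich s * span K {g} ≤ P.sandwich s :=
  calc P.sandwich s * span K {g} ≤ P.sandwich s * P :=
        mul_le_mul_right (span_le.2 (Set.singleton_subset_iff.2 hg)) _
    _ = P.sandwich s := by simp only [sandwich, sup_mul, mul_assoc, hP]

theorem sandwich_mul_span_le (hP : P * P = P) (h1 : 1 ∈ P)
    (h : span K {s} * P * span K {s} ≤ P.sandwich s) :
    P.sandwich s * span K {s} ≤ P.sandwich s := by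
  refine sup_mul P _ _ ▸ sup_le (mul_span_le_sandwich h1 le_rfl) ?_
  calc P * span K {s} * P * span K {s} = P * (span K {s} * P * span K {s}) := by
        simp only [mul_assoc]
    _ ≤ P * P.sandwich s := mul_le_mul_right h _
    _ = P.sandwich s := mul_sandwich hP

theorem span_singleton_mul_comm_of_commute (hcomm : ∀ q ∈ Q, Commute s q) :
    span K {s} * Q = Q * span K {s} :=
  mul_comm_of_commute fun _ hx q hq => by
    obtain ⟨c, rfl⟩ := mem_span_singleton.1 hx
    exact (hcomm q hq).smul_left c

theorem span_mul_mul_span_le_sandwich (h1 : 1 ∈ P) (hQ : Q ≤ P)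
    (hcomm : ∀ q ∈ Q, Commute s q) (hs : s * s ∈ 1 ⊔ span K {s}) :
    span K {s} * Q * span K {s} ≤ P.sandwich s :=
  calc span K {s} * Q * span K {s} = Q * span K {s * s} := by
        rw [span_singleton_mul_comm_of_commute hcomm, mul_assoc, span_mul_span, Set.singleton_mul_singleton]
    _ ≤ Q * (1 ⊔ span K {s}) := mul_le_mul_right (span_le.2 (Set.singleton_subset_iff.2 hs)) _
    _ ≤ P.sandwich s := by
        rw [mul_sup, mul_one]
        exact sup_le (hQ.trans le_sup_left) (mul_span_le_sandwich h1 hQ)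

theorem span_mul_braid_le_sandwich (hP : P * P = P) (hQ : Q ≤ P)
    (hcomm : ∀ q ∈ Q, Commute s q) {b : A} (hb : b ∈ P) (hbraid : s * b * s = b * s * b) :
    span K {s} * (Q * span K {b} * Q) * span K {s} ≤ P.sandwich s := by
  have hbP : span K {b} ≤ P := span_le.2 (Set.singleton_subset_iff.2 hb)
  have hspan (x y : A) : span K {x * y} = span K {x} * span K {y} := by
    rw [span_mul_span, Set.singleton_mul_singleton]
  have hc := span_singleton_mul_comm_of_commute hcomm
  calc span K {s} * (Q * span K {b} * Q) * span K {s}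
        = span K {s} * Q * span K {b} * (Q * span K {s}) := by simp only [mul_assoc]
    _ = Q * span K {s} * span K {b} * (span K {s} * Q) := by rw [hc]
    _ = Q * span K {s * b * s} * Q := by rw [hspan, hspan]; simp only [mul_assoc]
    _ = Q * span K {b} * span K {s} * (span K {b} * Q) := by
        rw [hbraid, hspan, hspan]; simp only [mul_assoc]
    _ ≤ P * P * span K {s} * (P * P) :=
        mul_le_mul' (mul_le_mul_left (mul_le_mul' hQ hbP) _) (mul_le_mul' hbP hQ)
    _ ≤ P.sandwich s := by rw [hP]; exact le_sup_right

end Submodule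

namespace LaurentPolynomial

variable {R : Type*} [Semiring R]

theorem degree_add_le (f g : R[T;T⁻¹]) : (f + g).degree ≤ max f.degree g.degree := by
  simp only [degree, Finset.max_eq_sup_coe]
  exact AddMonoidAlgebra.sup_support_coeff_add_le _ f g

theorem degree_mul_le (f g : R[T;T⁻¹]) : (f * g).degree ≤ f.degree + g.degree := by
  simp only [degree, Finset.max_eq_sup_coe]
  exact AddMonoidAlgebra.sup_support_coeff_mul_le (fun a b => (WithBot.coe_add a b).le) f g

theorem degree_smul_le {S : Type*} [SMulZeroClass S R] (c : S) (f : R[T;T⁻¹]) :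
    (c • f).degree ≤ f.degree := by
  simp only [degree, AddMonoidAlgebra.coeff_smul]
  exact Finset.max_mono Finsupp.support_smul

end LaurentPolynomial

namespace Hecke

theorem adjoin_range_σ : Algebra.adjoin C (Set.range (σ : Fin n → Hecke C z n)) = ⊤ := by
  have hσ : Set.range (σ : Fin n → Hecke C z n) =
      RingQuot.mkAlgHom C (HeckeRel C z n) '' Set.range (FreeAlgebra.ι C) := by
    rw [← Set.range_comp]; rfl
  rw [hσ, ← AlgHom.map_adjoin, FreeAlgebra.adjoin_range_ι, Algebra.map_top,
    AlgHom.range_eq_top]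
  exact RingQuot.mkAlgHom_surjective C _

theorem ιle_σ {m : ℕ} (h : m ≤ n) (i : Fin m) :
    ιle (z := z) h (σ i) = σ (Fin.castLE h i) := by
  rw [σ, ιle, RingQuot.liftAlgHom_mkAlgHom_apply, FreeAlgebra.lift_ι_apply]

theorem ιle_ιle {l m : ℕ} (h₁ : l ≤ m) (h₂ : m ≤ n) (x : Hecke C z l) :
    ιle h₂ (ιle h₁ x) = ιle (h₁.trans h₂) x := by
  have : (ιle (z := z) h₂).comp (ιle h₁) = ιle (h₁.trans h₂) :=
    AlgHom.ext_of_adjoin_eq_top adjoin_range_σ <| by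
      rintro _ ⟨i, rfl⟩
      simp only [AlgHom.comp_apply, ιle_σ, Fin.castLE_castLE]
  exact DFunLike.congr_fun this x

theorem ιle_self (h : n ≤ n) (x : Hecke C z n) : ιle h x = x := by
  have : ιle (z := z) h = AlgHom.id C _ :=
    AlgHom.ext_of_adjoin_eq_top adjoin_range_σ <| by
      rintro _ ⟨i, rfl⟩
      simp [ιle_σ]
  rw [this, AlgHom.id_apply]

theorem commute_σ_ιle {l : ℕ} (h : l ≤ n) (i : Fin n) (hi : l + 1 ≤ (i : ℕ))
    (x : Hecke C z l) : Commute (σ i) (ιle h x) := by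
  have hx : x ∈ Algebra.adjoin C (Set.range (σ : Fin l → Hecke C z l)) :=
    adjoin_range_σ (C := C) ▸ Algebra.mem_top
  induction hx using Algebra.adjoin_induction with
  | mem _ hy =>
    obtain ⟨j, rfl⟩ := hy
    rw [ιle_σ]
    exact (σ_comm _ i (by simp; omega)).symm
  | algebraMap r => rw [AlgHom.commutes]; exact Algebra.commute_algebraMap_right r _
  | add _ _ _ _ hx hy => rw [map_add]; exact hx.add_right hy
  | mul _ _ _ _ hx hy => rw [map_mul]; exact hx.mul_right hy

theorem σU_braid (i j : Fin n) (h : (j : ℕ) = (i : ℕ) + 1) :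
    σU (z := z) i * σU j * σU i = σU j * σU i * σU j :=
  Units.ext (σ_braid i j h)

theorem ιle_σU {m : ℕ} (h : m ≤ n) (i : Fin m) :
    ιle h (σU (z := z) i : Hecke C z m) = (σU (z := z) (Fin.castLE h i) : Hecke C z n) :=
  ιle_σ h i

theorem ιle_σU_inv {m : ℕ} (h : m ≤ n) (i : Fin m) :
    ιle h (((σU i)⁻¹ : (Hecke C z m)ˣ) : Hecke C z m) =
      (((σU (Fin.castLE h i))⁻¹ : (Hecke C z n)ˣ) : Hecke C z n) := by
  change ιle h (σ i - z • 1) = σ _ - z • 1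
  rw [map_sub, map_smul, map_one, ιle_σ]

section MarkovTrace

variable {M : Type*} [AddCommMonoid M] [Module C M]

structure IsMarkovTrace (t : ∀ m, Hecke C z m →ₗ[C] M) (a : C) : Prop where
  trace (m : ℕ) (u v : Hecke C z m) : t m (u * v) = t m (v * u)
  stab (m : ℕ) (u v : Hecke C z m) :
    t (m + 1) (ιle m.le_succ u * σ (Fin.last m) * ιle m.le_succ v) = a • t m (u * v)

variable {t : ∀ m, Hecke C z m →ₗ[C] M} {a : C}

theorem IsMarkovTrace.conj (ht : IsMarkovTrace t a) {m : ℕ} (g : (Hecke C z m)ˣ)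
    (x : Hecke C z m) : t m (g * x * ↑g⁻¹) = t m x := by
  rw [ht.trace, ← mul_assoc, Units.inv_mul, one_mul]

/-- Conjugation by `σ_j` and the braid relation trade `σ_j` for `σ_{j+1}`, so this follows by
downward induction on `j` from `j = m`, which is positive stabilization. -/
theorem IsMarkovTrace.ιle_mul_σ (ht : IsMarkovTrace t a) {j m : ℕ} (hjm : j ≤ m)
    (w : Hecke C z j) :
    t (m + 1) (ιle (hjm.trans m.le_succ) w * σ ⟨j, by omega⟩) = a • t m (ιle hjm w) := by
  induction hjm using Nat.decreasingInduction with
  | self =>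
    have h := ht.stab m w 1
    rw [map_one, mul_one, mul_one] at h
    rw [ιle_self]
    exact h
  | of_succ k hk ih =>
    have hconj := ih ((σU (z := z) (Fin.last k) : Hecke C z (k + 1)) * ιle k.le_succ w *
      (((σU (Fin.last k))⁻¹ : (Hecke C z (k + 1))ˣ) : Hecke C z (k + 1)))
    simp only [map_mul, ιle_ιle, ιle_σU, ιle_σU_inv] at hconj
    rw [ht.conj] at hconj
    rw [← hconj]
    exact (trace_conj_mul_of_braid (t (m + 1)) (ht.trace _)
      (σU_braid (n := m + 1) ⟨k, by omega⟩ ⟨k + 1, by omega⟩ rfl)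
      (commute_σ_ιle _ _ (by simp) w).symm).symm

theorem IsMarkovTrace.ιle_sandwich (ht : IsMarkovTrace t a) {j m : ℕ} (h : j + 1 ≤ m + 1)
    (x y : Hecke C z j) :
    t (m + 1) (ιle h (ιle j.le_succ x * σ (Fin.last j) * ιle j.le_succ y)) =
      a • t m (ιle (Nat.le_of_succ_le_succ h) (x * y)) := by
  have hjm := Nat.le_of_succ_le_succ h
  calc t (m + 1) (ιle h (ιle j.le_succ x * σ (Fin.last j) * ιle j.le_succ y))
      = t (m + 1) (ιle (hjm.trans m.le_succ) (y * x) * σ ⟨j, by omega⟩) := by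
        rw [map_mul (ιle h), map_mul (ιle h), ιle_ιle, ιle_ιle, ιle_σ, ht.trace, ← mul_assoc,
          ← map_mul]
        rfl
    _ = a • t m (ιle hjm (x * y)) := by
        rw [ht.ιle_mul_σ hjm, map_mul (ιle hjm), ht.trace, ← map_mul]

end MarkovTrace

section Decomposition

open Submodule

variable (K : Type*) [CommRing K] [Algebra K C]

/-- When `z ∈ K` this contains the inverses `σ_i - z` of the generators, hence all braid
words. -/
def adjoinσ (n : ℕ) : Subalgebra K (Hecke C z n) :=
  Algebra.adjoin K (Set.range σ)

def ιAdjoinσ (n : ℕ) : Submodule K (Hecke C z (n + 1)) :=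
  Subalgebra.toSubmodule ((adjoinσ K n).map ((ιle n.le_succ).restrictScalars K))

theorem adjoinσ_zero : adjoinσ K 0 = (⊥ : Subalgebra K (Hecke C z 0)) := by
  rw [adjoinσ, Set.range_eq_empty, Algebra.adjoin_empty]

theorem map_ιle_adjoinσ_le {l : ℕ} (h : l ≤ n) :
    (adjoinσ K l).map ((ιle h).restrictScalars K) ≤ adjoinσ (z := z) K n := by
  rw [adjoinσ, AlgHom.map_adjoin]
  refine Algebra.adjoin_mono ?_
  rintro _ ⟨_, ⟨i, rfl⟩, rfl⟩
  exact ⟨Fin.castLE h i, (ιle_σ h i).symm⟩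

variable {K}

theorem σ_sub_smul_one_mem_adjoinσ (hz : z ∈ Set.range (algebraMap K C)) (i : Fin n) :
    (σ i - z • 1 : Hecke C z n) ∈ adjoinσ K n := by
  obtain ⟨c, rfl⟩ := hz
  rw [algebraMap_smul]
  exact sub_mem (Algebra.subset_adjoin ⟨i, rfl⟩) (Subalgebra.smul_mem _ (one_mem _) c)

theorem ιAdjoinσ_mul_self (n : ℕ) : ιAdjoinσ (z := z) K n * ιAdjoinσ K n = ιAdjoinσ K n :=
  (Subalgebra.isIdempotentElem_toSubmodule _).eq

theorem one_mem_ιAdjoinσ (n : ℕ) : (1 : Hecke C z (n + 1)) ∈ ιAdjoinσ K n :=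
  one_mem (Subalgebra.map _ _)

theorem σ_castSucc_mem_ιAdjoinσ (i : Fin n) : σ (Fin.castSucc i) ∈ ιAdjoinσ (z := z) K n :=
  ⟨σ i, Algebra.subset_adjoin ⟨i, rfl⟩, ιle_σ _ i⟩

theorem σ_mul_σ_mem (hz : z ∈ Set.range (algebraMap K C)) (i : Fin n) :
    σ i * σ i ∈ (1 : Submodule K (Hecke C z n)) ⊔ span K {σ i} := by
  obtain ⟨c, rfl⟩ := hz
  rw [σ_quad, algebraMap_smul]
  exact add_mem_sup (one_le.1 le_rfl) (smul_mem _ c (mem_span_singleton_self _))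

theorem span_σ_mul_ιAdjoinσ_zero_le (hz : z ∈ Set.range (algebraMap K C)) :
    span K {σ (Fin.last 0)} * ιAdjoinσ K 0 * span K {σ (Fin.last 0)} ≤
      (ιAdjoinσ (z := z) K 0).sandwich (σ (Fin.last 0)) := by
  have h1 : ιAdjoinσ (z := z) K 0 = 1 := by
    rw [ιAdjoinσ, adjoinσ_zero, Algebra.map_bot, Algebra.toSubmodule_bot]
  rw [h1]
  refine span_mul_mul_span_le_sandwich (one_le.1 le_rfl) le_rfl ?_ (σ_mul_σ_mem hz _)
  intro q hq
  obtain ⟨c, rfl⟩ := mem_one.1 hq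
  exact Algebra.commute_algebraMap_right c _

theorem span_σ_mul_ιAdjoinσ_succ_le (hz : z ∈ Set.range (algebraMap K C)) {m : ℕ}
    (hdec : Subalgebra.toSubmodule (adjoinσ K (m + 1)) ≤
      (ιAdjoinσ (z := z) K m).sandwich (σ (Fin.last m))) :
    span K {σ (Fin.last (m + 1))} * ιAdjoinσ K (m + 1) * span K {σ (Fin.last (m + 1))} ≤
      (ιAdjoinσ (z := z) K (m + 1)).sandwich (σ (Fin.last (m + 1))) := by
  set ι := ((ιle (z := z) (m + 1).le_succ).restrictScalars K)
  set Q := (ιAdjoinσ (z := z) K m).map ι.toLinearMap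
  have hP : ιAdjoinσ K (m + 1) ≤ Q.sandwich (σ (Fin.castSucc (Fin.last m))) := by
    have hσ : σ (Fin.castSucc (Fin.last m)) = ι (σ (Fin.last m)) := (ιle_σ _ _).symm
    rw [hσ, ← map_sandwich, ιAdjoinσ, Subalgebra.map_toSubmodule]
    exact map_mono hdec
  have hQ : Q ≤ ιAdjoinσ K (m + 1) := by
    simp only [Q, ιAdjoinσ, ← Subalgebra.map_toSubmodule]
    exact Subalgebra.map_mono (map_ιle_adjoinσ_le K _)
  have hcomm : ∀ q ∈ Q, Commute (σ (Fin.last (m + 1))) q := by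
    rintro _ ⟨_, ⟨x, -, rfl⟩, rfl⟩
    change Commute _ (ιle _ (ιle _ x))
    rw [ιle_ιle]
    exact commute_σ_ιle _ _ (by simp) x
  calc _ ≤ span K {σ (Fin.last (m + 1))} * Q.sandwich (σ (Fin.castSucc (Fin.last m))) *
        span K {σ (Fin.last (m + 1))} := mul_le_mul_left (mul_le_mul_right hP _) _
    _ ≤ _ := by
        rw [sandwich, Submodule.mul_sup, Submodule.sup_mul]
        exact sup_le
          (span_mul_mul_span_le_sandwich (one_mem_ιAdjoinσ _) hQ hcomm (σ_mul_σ_mem hz _))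
          (span_mul_braid_le_sandwich (ιAdjoinσ_mul_self _) hQ hcomm
            (σ_castSucc_mem_ιAdjoinσ _) (σ_braid _ _ rfl).symm)

theorem adjoinσ_succ_le_sandwich_of_le {n : ℕ}
    (h : span K {σ (Fin.last n)} * ιAdjoinσ K n * span K {σ (Fin.last n)} ≤
      (ιAdjoinσ (z := z) K n).sandwich (σ (Fin.last n))) :
    Subalgebra.toSubmodule (adjoinσ (z := z) K (n + 1)) ≤
      (ιAdjoinσ K n).sandwich (σ (Fin.last n)) := by
  refine Algebra.toSubmodule_adjoin_le_of_mul_mem (mem_sup_left (one_mem_ιAdjoinσ n)) ?_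
  rintro v hv _ ⟨i, rfl⟩
  induction i using Fin.lastCases with
  | last =>
    exact sandwich_mul_span_le (ιAdjoinσ_mul_self n) (one_mem_ιAdjoinσ n) h
      (mul_mem_mul hv (mem_span_singleton_self _))
  | cast i =>
    exact sandwich_mul_span_le_of_mem (ιAdjoinσ_mul_self n) (σ_castSucc_mem_ιAdjoinσ i)
      (mul_mem_mul hv (mem_span_singleton_self _))

theorem adjoinσ_succ_le_sandwich (hz : z ∈ Set.range (algebraMap K C)) :
    ∀ n : ℕ, Subalgebra.toSubmodule (adjoinσ K (n + 1)) ≤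
      (ιAdjoinσ (z := z) K n).sandwich (σ (Fin.last n))
  | 0 => adjoinσ_succ_le_sandwich_of_le (span_σ_mul_ιAdjoinσ_zero_le hz)
  | m + 1 => adjoinσ_succ_le_sandwich_of_le
      (span_σ_mul_ιAdjoinσ_succ_le hz (adjoinσ_succ_le_sandwich hz m))

end Decomposition

section TraceBound

open LaurentPolynomial Submodule

variable (K : Type) [CommRing K]

/-- The values `τ = ∑ P_k α_k` (with `α_k = single k 1`) such that `e(τ) ≥ -n`, i.e.
`deg_a P_k ≤ n - k` for every `k`. -/
def mfwSubmodule (n : ℕ) : Submodule K (ℕ →₀ K[T;T⁻¹]) where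
  carrier := {P | ∀ k, (P k).degree ≤ ((n : ℤ) - k : ℤ)}
  add_mem' hP hQ k := (degree_add_le _ _).trans (max_le (hP k) (hQ k))
  zero_mem' k := by simp
  smul_mem' c P hP k := (degree_smul_le c (P k)).trans (hP k)

variable {K}

theorem single_mem_mfwSubmodule (n : ℕ) : Finsupp.single n 1 ∈ mfwSubmodule K n := by
  intro k
  rcases eq_or_ne n k with rfl | hne
  · rw [Finsupp.single_eq_same, sub_self, ← map_one C]
    exact degree_C_le 1
  · simp [Finsupp.single_eq_of_ne hne.symm]

theorem T_smul_mem_mfwSubmodule {n : ℕ} {P : ℕ →₀ K[T;T⁻¹]} (hP : P ∈ mfwSubmodule K n) :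
    (T 1 : K[T;T⁻¹]) • P ∈ mfwSubmodule K (n + 1) := by
  intro k
  rw [Finsupp.smul_apply, smul_eq_mul]
  calc (T 1 * P k).degree ≤ (T 1 : K[T;T⁻¹]).degree + (P k).degree := degree_mul_le _ _
    _ ≤ ((1 : ℤ) : WithBot ℤ) + (((n : ℤ) - k : ℤ) : WithBot ℤ) :=
        add_le_add (degree_T_le 1) (hP k)
    _ = (((n + 1 : ℕ) : ℤ) - k : ℤ) := by rw [← WithBot.coe_add]; congr 1; push_cast; ring

theorem IsMarkovTrace.adjoinσ_le_comap {z : K[T;T⁻¹]}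
    {t : ∀ m, Hecke K[T;T⁻¹] z m →ₗ[K[T;T⁻¹]] (ℕ →₀ K[T;T⁻¹])} (ht : IsMarkovTrace t (T 1))
    (hone : ∀ m, t m 1 = Finsupp.single m 1) (hz : z ∈ Set.range (algebraMap K K[T;T⁻¹])) :
    ∀ {j m : ℕ} (h : j ≤ m), Subalgebra.toSubmodule (adjoinσ K j) ≤
      (mfwSubmodule K m).comap (((t m).comp (ιle h).toLinearMap).restrictScalars K)
  | 0, m, h => by
    rw [adjoinσ_zero, Algebra.toSubmodule_bot, Submodule.one_le, mem_comap]
    simpa [hone] using single_mem_mfwSubmodule m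
  | j + 1, m, h => by
    refine (adjoinσ_succ_le_sandwich hz j).trans (sup_le ?_ (mul_le.2 ?_))
    · rintro _ ⟨x, hx, rfl⟩
      have hx' := ht.adjoinσ_le_comap hone hz (j.le_succ.trans h) hx
      rw [mem_comap] at hx' ⊢
      simpa [ιle_ιle] using hx'
    · intro u hu v hv
      obtain ⟨_, ⟨x, hx, rfl⟩, rfl⟩ := mem_mul_span_singleton.1 hu
      obtain ⟨y, hy, rfl⟩ := hv
      obtain ⟨m, rfl⟩ : ∃ m', m = m' + 1 := ⟨m - 1, by omega⟩
      have hxy := ht.adjoinσ_le_comap hone hz (Nat.le_of_succ_le_succ h)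
        (show x * y ∈ adjoinσ K j from mul_mem hx hy)
      change t (m + 1) (ιle h (ιle _ x * σ _ * ιle _ y)) ∈ mfwSubmodule K (m + 1)
      rw [ht.ιle_sandwich]
      exact T_smul_mem_mfwSubmodule hxy

end TraceBound

end Hecke

open LaurentPolynomial in
theorem hecke_transverse_trace_mfw_inequality_general (C : Type) [CommRing C]
    (zc : Cˣ)
    (z : LaurentPolynomial C) (hzR : z = algebraMap C (LaurentPolynomial C) (zc : C))
    (t : ∀ m : ℕ, Hecke (LaurentPolynomial C) z m →ₗ[LaurentPolynomial C] (ℕ →₀ LaurentPolynomial C))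
    (htrace : ∀ (m : ℕ) (u v : Hecke (LaurentPolynomial C) z m), t m (u * v) = t m (v * u))
    (hstab : ∀ (m : ℕ) (u v : Hecke (LaurentPolynomial C) z m),
      t (m + 1) (Hecke.ιle (Nat.le_succ m) u * Hecke.σ (Fin.last m) *
          Hecke.ιle (Nat.le_succ m) v) = (T 1 : LaurentPolynomial C) • t m (u * v))
    (hone : ∀ m : ℕ, t m 1 = Finsupp.single m 1) :
    ∀ (m : ℕ) (w : List (Fin m × Bool)) (k : ℕ),
      (((t m ((w.map fun p =>
            if p.2 then Hecke.σ p.1 else Hecke.σ p.1 - z • 1).prod)) k).coeff.support.max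
          : WithBot ℤ)
        ≤ (((m : ℤ) - (k : ℤ) : ℤ) : WithBot ℤ) := by
  intro m w k
  have hz : z ∈ Set.range (algebraMap C (LaurentPolynomial C)) := ⟨zc, hzR.symm⟩
  have hw : (w.map fun p => if p.2 then Hecke.σ p.1 else
      Hecke.σ p.1 - z • (1 : Hecke (LaurentPolynomial C) z m)).prod ∈
      Hecke.adjoinσ C m := by
    refine Subalgebra.list_prod_mem _ ?_
    rintro _ hx
    obtain ⟨⟨i, b⟩, -, rfl⟩ := List.mem_map.1 hx
    cases b
    · exact Hecke.σ_sub_smul_one_mem_adjoinσ hz i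
    · exact Algebra.subset_adjoin ⟨i, rfl⟩
  have hbound := (Hecke.IsMarkovTrace.mk htrace hstab).adjoinσ_le_comap hone hz le_rfl hw k
  simp only [LinearMap.restrictScalars_apply, LinearMap.comp_apply, AlgHom.toLinearMap_apply,
    Hecke.ιle_self] at hbound
  exact hbound

open LaurentPolynomial in
/-- Let `(τ_n)` be the transverse Markov trace on the Hecke algebras
over `R = C[a^{±1}]` (Laurent polynomials in the framing variable `a = T 1` over the
ring `C` containing `q` with `q − q⁻¹` invertible) with generic parameters `{α_k}`:
its values are recorded in the free module `ℕ →₀ R`, with `τ_n(1) = α_n` the `n`-th basis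
vector, trace property, and positive stabilization with scalar `a = T 1`.
Then for every braid word `w` on `n` strands with image `u` in `H_n`, every coefficient
`P_k` of `τ_n(u) = Σ P_k α_k` satisfies `deg_a(P_k) ≤ n − k`, i.e.
`e(τ_n(u)) = min{−deg_a(P_k) − k} ≥ −n`. -/
theorem hecke_transverse_trace_mfw_inequality (C : Type) [CommRing C]
    (q zc : Cˣ) (hz : (zc : C) = (q : C) - ((q⁻¹ : Cˣ) : C))
    (z : LaurentPolynomial C) (hzR : z = algebraMap C (LaurentPolynomial C) (zc : C))
    (t : ∀ m : ℕ, Hecke (LaurentPolynomial C) z m →ₗ[LaurentPolynomial C] (ℕ →₀ LaurentPolynomial C))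
    (htrace : ∀ (m : ℕ) (u v : Hecke (LaurentPolynomial C) z m), t m (u * v) = t m (v * u))
    (hstab : ∀ (m : ℕ) (u v : Hecke (LaurentPolynomial C) z m),
      t (m + 1) (Hecke.ιle (Nat.le_succ m) u * Hecke.σ (Fin.last m) *
          Hecke.ιle (Nat.le_succ m) v) = (T 1 : LaurentPolynomial C) • t m (u * v))
    (hone : ∀ m : ℕ, t m 1 = Finsupp.single m 1) :
    ∀ (m : ℕ) (w : List (Fin m × Bool)) (k : ℕ),
      (((t m ((w.map fun p =>
            if p.2 then Hecke.σ p.1 else Hecke.σ p.1 - z • 1).prod)) k).coeff.support.max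
          : WithBot ℤ)
        ≤ (((m : ℤ) - (k : ℤ) : ℤ) : WithBot ℤ) :=
  hecke_transverse_trace_mfw_inequality_general C zc z hzR t htrace hstab hone

end
end
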